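/- The minimum number of disjoint c-sparse sets needed to partition the n×n checkerboard equals the smallest natural number strictly greater than n/2, i.e., σ(G_{n×n}) = ⌊n/2⌋ + 1. -/
import Mathlib


/-- Lexicographic order on cells of the checkerboard. -/
def clt (p q : ℕ × ℕ) : Prop := p.1 < q.1 ∨ (p.1 = q.1 ∧ p.2 < q.2)

/-- The n × m checkerboard: cells (i,j) with 1 ≤ i ≤ n, 1 ≤ j ≤ m. -/
def board (n m : ℕ) : Finset (ℕ × ℕ) := Finset.Icc 1 n ×ˢ Finset.Icc 1 m

/-- A set of cells is c-sparse if no cell of the set in a different column lies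
strictly (lexicographically) between two cells of the set in the same column. -/
def CSparse (S : Finset (ℕ × ℕ)) : Prop :=
  ∀ a₁ a₂ b x y, (a₁, b) ∈ S → (a₂, b) ∈ S → (x, y) ∈ S → y ≠ b →
    clt (a₁, b) (x, y) → clt (x, y) (a₂, b) → False

/-- A c-sparse partition of the n × n checkerboard. -/
def IsCSparsePartition (n : ℕ) (Q : Finset (Finset (ℕ × ℕ))) : Prop :=
  (∀ S ∈ Q, S.Nonempty ∧ CSparse S) ∧
  (∀ S ∈ Q, ∀ T ∈ Q, S ≠ T → Disjoint S T) ∧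
  Q.biUnion id = board n n

/-- The t-th part of the explicit partition: a union of two double-diagonal staircases. -/
def part (n t : ℕ) : Finset (ℕ × ℕ) :=
  (board n n).filter (fun p =>
    p.2 + 2*t + 2 = p.1 + n ∨ p.2 + 2*t + 1 = p.1 + n ∨
    p.2 + 2*t + 2*(n/2) + 4 = p.1 + n ∨ p.2 + 2*t + 2*(n/2) + 3 = p.1 + n)

lemma mem_part {n t : ℕ} {p : ℕ × ℕ} : p ∈ part n t ↔
    (1 ≤ p.1 ∧ p.1 ≤ n ∧ 1 ≤ p.2 ∧ p.2 ≤ n) ∧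
    (p.2 + 2*t + 2 = p.1 + n ∨ p.2 + 2*t + 1 = p.1 + n ∨
     p.2 + 2*t + 2*(n/2) + 4 = p.1 + n ∨ p.2 + 2*t + 2*(n/2) + 3 = p.1 + n) := by
  simp [part, board, Finset.mem_filter, Finset.mem_product, Finset.mem_Icc, and_assoc]

lemma csparse_part (n t : ℕ) : CSparse (part n t) := by
  intro a₁ a₂ b x y h1 h2 h3 hy hc1 hc2
  rw [mem_part] at h1 h2 h3
  simp only [clt] at hc1 hc2
  omega

lemma part_disjoint {n t t' : ℕ} (ht : t ≤ n/2) (ht' : t' ≤ n/2) (hne : t ≠ t') :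
    Disjoint (part n t) (part n t') := by
  rw [Finset.disjoint_left]
  intro p hp hp'
  rw [mem_part] at hp hp'
  omega

/-- Witness cell in each part. -/
def wit (n t : ℕ) : ℕ × ℕ := if 2*t < n then (1, n - 2*t) else (2, 1)

lemma wit_mem {n t : ℕ} (hn : 1 ≤ n) (ht : t ≤ n/2) : wit n t ∈ part n t := by
  rw [wit]
  split_ifs with h <;> rw [mem_part] <;> simp <;> omega

lemma part_cover {n : ℕ} {p : ℕ × ℕ} (hp : p ∈ board n n) : ∃ t, t ≤ n/2 ∧ p ∈ part n t := by
  simp only [board, Finset.mem_product, Finset.mem_Icc] at hp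
  refine ⟨if p.1 + n ≤ p.2 + 2*(n/2) + 2 then (p.1 + n - p.2 - 1)/2
          else (p.1 + n - p.2 - 2*(n/2) - 3)/2, ?_, ?_⟩
  · split_ifs <;> omega
  · rw [mem_part]
    split_ifs <;> omega

/-- Any c-sparse subset of the n × n board has at most 2n - 1 cells. -/
lemma csparse_card_le {n : ℕ} {S : Finset (ℕ × ℕ)} (hb : S ⊆ board n n) (hs : CSparse S) :
    S.card ≤ 2*n - 1 := by
  classical
  set φ : ℕ × ℕ → ℕ := fun p =>
    p.1 + ((S.filter (fun q => q.1 < p.1 ∨ (q.1 = p.1 ∧ q.2 ≤ p.2))).image Prod.snd).card with hφ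
  have hself : ∀ p ∈ S, p ∈ S.filter (fun q => q.1 < p.1 ∨ (q.1 = p.1 ∧ q.2 ≤ p.2)) := by
    intro p hp
    simp [Finset.mem_filter, hp]
  have hsub : ∀ p q : ℕ × ℕ, clt p q →
      (S.filter (fun r => r.1 < p.1 ∨ (r.1 = p.1 ∧ r.2 ≤ p.2))) ⊆
      (S.filter (fun r => r.1 < q.1 ∨ (r.1 = q.1 ∧ r.2 ≤ q.2))) := by
    intro p q hpq
    intro r hr
    simp only [Finset.mem_filter] at hr ⊢
    simp only [clt] at hpq
    exact ⟨hr.1, by omega⟩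
  have hmono : ∀ p ∈ S, ∀ q ∈ S, clt p q → φ p < φ q := by
    intro p hp q hq hpq
    have hp1q1 : p.1 ≤ q.1 := by simp only [clt] at hpq; omega
    by_cases hcol : p.2 = q.2
    · -- same column: rows strictly increase
      have h11 : p.1 < q.1 := by simp only [clt] at hpq; omega
      have hcard : ((S.filter (fun r => r.1 < p.1 ∨ (r.1 = p.1 ∧ r.2 ≤ p.2))).image Prod.snd).card
          ≤ ((S.filter (fun r => r.1 < q.1 ∨ (r.1 = q.1 ∧ r.2 ≤ q.2))).image Prod.snd).card :=
        Finset.card_le_card (Finset.image_subset_image (hsub p q hpq))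
      simp only [hφ]
      omega
    · -- different columns: q.2 is a new column
      have hnotin : q.2 ∉ (S.filter (fun r => r.1 < p.1 ∨ (r.1 = p.1 ∧ r.2 ≤ p.2))).image Prod.snd := by
        intro hmem
        simp only [Finset.mem_image, Finset.mem_filter] at hmem
        obtain ⟨r, ⟨hrS, hrL⟩, hr2⟩ := hmem
        have hrS' : (r.1, q.2) ∈ S := by
          have h : (r.1, q.2) = r := by
            rw [← hr2]
          rw [h]; exact hrS
        refine hs r.1 q.1 q.2 p.1 p.2 hrS' hq hp hcol ?_ ?_
        · simp only [clt]
          omega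
        · simpa only [clt] using hpq
      have hqin : q.2 ∈ (S.filter (fun r => r.1 < q.1 ∨ (r.1 = q.1 ∧ r.2 ≤ q.2))).image Prod.snd :=
        Finset.mem_image_of_mem Prod.snd (hself q hq)
      have hss : (S.filter (fun r => r.1 < p.1 ∨ (r.1 = p.1 ∧ r.2 ≤ p.2))).image Prod.snd ⊂
          (S.filter (fun r => r.1 < q.1 ∨ (r.1 = q.1 ∧ r.2 ≤ q.2))).image Prod.snd :=
        ⟨Finset.image_subset_image (hsub p q hpq), fun hc => hnotin (hc hqin)⟩
      have hcard := Finset.card_lt_card hss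
      simp only [hφ]
      omega
  have hmaps : ∀ p ∈ S, φ p ∈ Finset.Icc 2 (2*n) := by
    intro p hp
    have hpb := hb hp
    simp only [board, Finset.mem_product, Finset.mem_Icc] at hpb
    have h1 : 1 ≤ ((S.filter (fun q => q.1 < p.1 ∨ (q.1 = p.1 ∧ q.2 ≤ p.2))).image Prod.snd).card := by
      rw [Nat.one_le_iff_ne_zero, Ne, Finset.card_eq_zero, ← Ne, ← Finset.nonempty_iff_ne_empty]
      exact ⟨p.2, Finset.mem_image_of_mem Prod.snd (hself p hp)⟩
    have h2 : ((S.filter (fun q => q.1 < p.1 ∨ (q.1 = p.1 ∧ q.2 ≤ p.2))).image Prod.snd).card ≤ n := by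
      have hsub2 : (S.filter (fun q => q.1 < p.1 ∨ (q.1 = p.1 ∧ q.2 ≤ p.2))).image Prod.snd ⊆
          Finset.Icc 1 n := by
        intro c hc
        simp only [Finset.mem_image, Finset.mem_filter] at hc
        obtain ⟨r, ⟨hrS, _⟩, hr2⟩ := hc
        have := hb hrS
        simp only [board, Finset.mem_product, Finset.mem_Icc] at this
        rw [Finset.mem_Icc, ← hr2]
        exact this.2
      calc _ ≤ (Finset.Icc 1 n).card := Finset.card_le_card hsub2
        _ = n := by rw [Nat.card_Icc]; omega
    rw [Finset.mem_Icc]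
    simp only [hφ]
    omega
  have hinj : Set.InjOn φ S := by
    intro p hp q hq hpq
    by_contra hne
    have htri : clt p q ∨ clt q p := by
      have : ¬(p.1 = q.1 ∧ p.2 = q.2) := fun h => hne (Prod.ext h.1 h.2)
      simp only [clt]
      omega
    rcases htri with h | h
    · exact absurd hpq (Nat.ne_of_lt (hmono p hp q hq h))
    · exact absurd hpq.symm (Nat.ne_of_lt (hmono q hq p hp h))
  have := Finset.card_le_card_of_injOn φ hmaps hinj
  calc S.card ≤ (Finset.Icc 2 (2*n)).card := this
    _ ≤ 2*n - 1 := by rw [Nat.card_Icc]; omega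

theorem sigma_eq (n : ℕ) (hn : 1 ≤ n) :
    IsLeast {c : ℕ | ∃ Q : Finset (Finset (ℕ × ℕ)), IsCSparsePartition n Q ∧ Q.card = c}
      (n / 2 + 1) := by
  constructor
  · -- membership: the explicit partition
    refine ⟨(Finset.range (n/2+1)).image (part n), ⟨?_, ?_, ?_⟩, ?_⟩
    · intro S hS
      simp only [Finset.mem_image, Finset.mem_range] at hS
      obtain ⟨t, ht, rfl⟩ := hS
      exact ⟨⟨wit n t, wit_mem hn (by omega)⟩, csparse_part n t⟩
    · intro S hS T hT hST
      simp only [Finset.mem_image, Finset.mem_range] at hS hT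
      obtain ⟨t, ht, rfl⟩ := hS
      obtain ⟨t', ht', rfl⟩ := hT
      exact part_disjoint (by omega) (by omega) (fun h => hST (by rw [h]))
    · ext p
      simp only [Finset.mem_biUnion, Finset.mem_image, Finset.mem_range, id]
      constructor
      · rintro ⟨S, ⟨t, _, rfl⟩, hp⟩
        exact Finset.mem_of_mem_filter p hp
      · intro hp
        obtain ⟨t, ht, hmem⟩ := part_cover hp
        exact ⟨part n t, ⟨t, by omega, rfl⟩, hmem⟩
    · rw [Finset.card_image_of_injOn, Finset.card_range]
      intro t ht t' ht' h
      simp only [Finset.coe_range, Set.mem_Iio] at ht ht'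
      by_contra hne
      exact (Finset.disjoint_left.mp (part_disjoint (t := t) (t' := t') (by omega) (by omega) hne))
        (wit_mem hn (by omega)) (h ▸ wit_mem hn (by omega))
  · -- lower bound
    rintro c ⟨Q, ⟨hparts, hdisj, hcover⟩, hcard⟩
    have hboardcard : (board n n).card = n * n := by
      simp [board, Nat.card_Icc]
    have h1 : n * n ≤ ∑ S ∈ Q, S.card := by
      calc n * n = (Q.biUnion id).card := by rw [hcover, hboardcard]
        _ ≤ ∑ S ∈ Q, (id S).card := Finset.card_biUnion_le
    have h2 : ∀ S ∈ Q, S.card ≤ 2*n - 1 := by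
      intro S hS
      refine csparse_card_le ?_ (hparts S hS).2
      intro p hp
      rw [← hcover]
      exact Finset.mem_biUnion.mpr ⟨S, hS, hp⟩
    have h3 : ∑ S ∈ Q, S.card ≤ c * (2*n - 1) := by
      rw [← hcard]
      calc ∑ S ∈ Q, S.card ≤ ∑ _S ∈ Q, (2*n - 1) := Finset.sum_le_sum h2
        _ = Q.card * (2*n - 1) := by rw [Finset.sum_const, smul_eq_mul]
    -- n*n ≤ c*(2n-1); conclude n/2 + 1 ≤ c
    by_contra hlt
    push_neg at hlt
    have h2c : 2*c ≤ n := by omega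
    obtain ⟨k, hk⟩ : ∃ k, 2*n = k + 1 := ⟨2*n - 1, by omega⟩
    have hk' : 2*n - 1 = k := by omega
    rw [hk'] at h3
    have h4 : n * n ≤ c * k := le_trans h1 h3
    have h5 : 2 * (c * k) ≤ n * k := by
      calc 2 * (c * k) = (2 * c) * k := by ring
        _ ≤ n * k := Nat.mul_le_mul_right k h2c
    have h6 : n * k + n = 2 * (n * n) := by
      calc n * k + n = n * (k + 1) := by ring
        _ = n * (2 * n) := by rw [← hk]
        _ = 2 * (n * n) := by ring
    omega
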